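/- arXiv:2408.02258 — 5 statements merged into one kernel-verified Lean document; each statement's English description precedes it below -/
import Mathlib

section
/- For the two-qubit Werner state with parameter p ∈ [0,1), if the fully entangled fraction (1+3p)/4 > 1/2, then the conditional von Neumann entropy S(A|B) = -3((1-p)/4)·log₂((1-p)/4) - ((1+3p)/4)·log₂((1+3p)/4) - 1 satisfies S(A|B) < 3δ·log₂(1/(2δ)), where δ = (1-p)/4. -/
theorem werner_fef_gt_half_implies_cvne_upper_bound
    (p : ℝ) (hp0 : 0 ≤ p) (hp1 : p < 1)
    (hF : (1 + 3 * p) / 4 > 1 / 2) :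
    -3 * ((1 - p) / 4) * Real.logb 2 ((1 - p) / 4)
      - ((1 + 3 * p) / 4) * Real.logb 2 ((1 + 3 * p) / 4) - 1
    < 3 * ((1 - p) / 4) * Real.logb 2 (1 / (2 * ((1 - p) / 4))) := by
  have hδ : (0:ℝ) < (1 - p) / 4 := by linarith
  have hFpos : (0:ℝ) < (1 + 3 * p) / 4 := by linarith
  have hlog : Real.logb 2 (1 / (2 * ((1 - p) / 4)))
      = -(1 + Real.logb 2 ((1 - p) / 4)) := by
    rw [one_div, Real.logb_inv, Real.logb_mul (by norm_num) (ne_of_gt hδ),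
      Real.logb_self_eq_one (by norm_num)]
  rw [hlog]
  have h2 : Real.logb 2 ((1:ℝ)/2) = -1 := by
    rw [one_div, Real.logb_inv, Real.logb_self_eq_one (by norm_num)]
  have hM : Real.logb 2 ((1 + 3 * p) / 4) > -1 := by
    have := Real.logb_lt_logb (by norm_num : (1:ℝ) < 2) (by norm_num : (0:ℝ) < 1/2) hF
    linarith [h2 ▸ this]
  have key : ((1 + 3 * p) / 4) * Real.logb 2 ((1 + 3 * p) / 4) > -((1 + 3 * p) / 4) := by
    nlinarith
  nlinarith [key]
end

section
/- Let t₁, t₂, t₃ be reals with |t₁| + |t₂| + |t₃| > 1, and set R = |t₁||t₂| + |t₁||t₃| + |t₂||t₃| with 0 < R < 1. Then 1 - log₂(1 + t₁² + t₂² + t₃²) < log₂(1/(1-R)). -/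
theorem weyl_fef_gt_half_implies_cr2e_upper_bound
    (t₁ t₂ t₃ : ℝ) (hN : |t₁| + |t₂| + |t₃| > 1)
    (R : ℝ) (hR : R = |t₁| * |t₂| + |t₁| * |t₃| + |t₂| * |t₃|)
    (hR0 : 0 < R) (hR1 : R < 1) :
    1 - Real.logb 2 (1 + t₁ ^ 2 + t₂ ^ 2 + t₃ ^ 2) < Real.logb 2 (1 / (1 - R)) := by
  have hs : (0:ℝ) < 1 + t₁ ^ 2 + t₂ ^ 2 + t₃ ^ 2 := by positivity
  have h1R : (0:ℝ) < 1 - R := by linarith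
  have key : 2 * (1 - R) < 1 + t₁ ^ 2 + t₂ ^ 2 + t₃ ^ 2 := by
    nlinarith [sq_abs t₁, sq_abs t₂, sq_abs t₃, hN, hR,
      mul_self_lt_mul_self (by norm_num : (0:ℝ) ≤ 1) hN]
  have h2 : 2 / (1 + t₁ ^ 2 + t₂ ^ 2 + t₃ ^ 2) < 1 / (1 - R) := by
    rw [div_lt_div_iff₀ hs h1R]; linarith
  calc 1 - Real.logb 2 (1 + t₁ ^ 2 + t₂ ^ 2 + t₃ ^ 2)
      = Real.logb 2 (2 / (1 + t₁ ^ 2 + t₂ ^ 2 + t₃ ^ 2)) := by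
        rw [Real.logb_div (by norm_num) (ne_of_gt hs), Real.logb_self_eq_one] <;> norm_num
    _ < Real.logb 2 (1 / (1 - R)) :=
        Real.logb_lt_logb (by norm_num) (by positivity) h2
end

section
/- Let d ≥ 2 be an integer and F ∈ (0,1). If -F·log₂F - (1-F)·log₂((1-F)/(d²-1)) - log₂d < 0, then F > log₂((d²-1)/d) / log₂(d²-1). -/
theorem isotropic_negative_cvne_implies_fef_lower_bound
    (d : ℕ) (hd : 2 ≤ d) (F : ℝ) (hF0 : 0 < F) (hF1 : F < 1)
    (hS : -F * Real.logb 2 F - (1 - F) * Real.logb 2 ((1 - F) / ((d : ℝ) ^ 2 - 1))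
        - Real.logb 2 (d : ℝ) < 0) :
    F > Real.logb 2 (((d : ℝ) ^ 2 - 1) / (d : ℝ)) / Real.logb 2 ((d : ℝ) ^ 2 - 1) := by
  have hd2 : (2:ℝ) ≤ (d:ℝ) := by exact_mod_cast hd
  have hD : (1:ℝ) < (d:ℝ)^2 - 1 := by nlinarith
  have hLD : 0 < Real.logb 2 ((d:ℝ)^2 - 1) := Real.logb_pos one_lt_two hD
  have h1F : 0 < 1 - F := by linarith
  have hquot : Real.logb 2 ((1-F)/((d:ℝ)^2-1))
      = Real.logb 2 (1-F) - Real.logb 2 ((d:ℝ)^2-1) :=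
    Real.logb_div (by linarith) (by linarith)
  have hquot2 : Real.logb 2 (((d:ℝ)^2-1)/(d:ℝ))
      = Real.logb 2 ((d:ℝ)^2-1) - Real.logb 2 (d:ℝ) :=
    Real.logb_div (by linarith) (by linarith)
  have hF' : Real.logb 2 F ≤ 0 := Real.logb_nonpos one_lt_two hF0.le hF1.le
  have h1F' : Real.logb 2 (1-F) ≤ 0 := Real.logb_nonpos one_lt_two h1F.le (by linarith)
  have hLd : 0 ≤ Real.logb 2 (d:ℝ) := Real.logb_nonneg one_lt_two (by linarith)
  rw [hquot] at hS
  rw [hquot2, gt_iff_lt, div_lt_iff₀ hLD]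
  nlinarith [mul_nonneg hF0.le (neg_nonneg.mpr hF'), mul_nonneg h1F.le (neg_nonneg.mpr h1F')]
end

section
/- Let d ≥ 2 be a natural number, n = d², and p₀,…,p_{n-1} be nonnegative reals summing to 1 with each pᵢ > 0. Let F = max_i pᵢ and let β be the product of pᵢ^{pᵢ} over all indices except one attaining the maximum. If -∑ pᵢ·log₂pᵢ - log₂d < 0, then F^F · d · β > 1. -/
/-!
Since `log₂ ∏ pᵢ ^ pᵢ = ∑ pᵢ log₂ pᵢ`, the condition `S(A|B) < 0` is literally
`log₂ (d · ∏ pᵢ ^ pᵢ) > 0`; splitting the factor of `i₀` off the product gives the claim.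
-/

open Finset Real

lemma Real.logb_prod_rpow_self {ι : Type*} (b : ℝ) (s : Finset ι) {p : ι → ℝ}
    (hp : ∀ i ∈ s, 0 < p i) :
    logb b (∏ i ∈ s, p i ^ p i) = ∑ i ∈ s, p i * logb b (p i) := by
  rw [logb_prod _ _ fun i hi => (rpow_pos_of_pos (hp i hi) _).ne']
  exact sum_congr rfl fun i hi => logb_rpow_eq_mul_logb_of_pos (hp i hi)

lemma one_lt_mul_prod_rpow_self_of_entropy_sub_logb_neg {ι : Type*} {s : Finset ι}
    {p : ι → ℝ} {b c : ℝ} (hb : 1 < b) (hc : 0 < c) (hp : ∀ i ∈ s, 0 < p i)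
    (h : -∑ i ∈ s, p i * logb b (p i) - logb b c < 0) :
    1 < c * ∏ i ∈ s, p i ^ p i := by
  have hprod : 0 < ∏ i ∈ s, p i ^ p i := prod_pos fun i hi => rpow_pos_of_pos (hp i hi) _
  rw [← logb_lt_logb_iff hb one_pos (mul_pos hc hprod), logb_one, logb_mul hc.ne' hprod.ne',
    logb_prod_rpow_self b s hp]
  linarith

theorem genbell_negative_cvne_implies_general
    (d : ℕ) (p : Fin (d ^ 2) → ℝ)
    (hpos : ∀ i, 0 < p i)
    (i₀ : Fin (d ^ 2))
    (hS : -∑ i, p i * Real.logb 2 (p i) - Real.logb 2 (d : ℝ) < 0) :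
    (p i₀) ^ (p i₀) * (d : ℝ) * (∏ i ∈ Finset.univ.erase i₀, (p i) ^ (p i)) > 1 := by
  have hd : (0 : ℝ) < d := by exact_mod_cast (pow_pos_iff two_ne_zero).mp i₀.pos
  rw [mul_right_comm, mul_prod_erase _ (fun i => p i ^ p i) (mem_univ i₀), mul_comm]
  exact one_lt_mul_prod_rpow_self_of_entropy_sub_logb_neg one_lt_two hd (fun i _ => hpos i) hS

theorem genbell_negative_cvne_implies
    (d : ℕ) (hd : 2 ≤ d) (p : Fin (d ^ 2) → ℝ)
    (hpos : ∀ i, 0 < p i) (hsum : ∑ i, p i = 1)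
    (i₀ : Fin (d ^ 2)) (hmax : ∀ i, p i ≤ p i₀)
    (hS : -∑ i, p i * Real.logb 2 (p i) - Real.logb 2 (d : ℝ) < 0) :
    (p i₀) ^ (p i₀) * (d : ℝ) * (∏ i ∈ Finset.univ.erase i₀, (p i) ^ (p i)) > 1 :=
  genbell_negative_cvne_implies_general d p hpos i₀ hS
end

section
/- Let d ≥ 2 and p ∈ (2/(d+1), 1]. Then log₂[((d-1)p² + (d - dp + p)²)/(d²(p² + (1-p)²))] < 0. Conversely, if this quantity is negative with p ∈ (0,1], then p > 2/(d+1). -/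
theorem rank_deficient_cr2e_negative_iff
    (d : ℕ) (hd : 2 ≤ d) :
    (∀ p : ℝ, 2 / ((d : ℝ) + 1) < p → p ≤ 1 →
      Real.logb 2 ((((d : ℝ) - 1) * p ^ 2 + ((d : ℝ) - (d : ℝ) * p + p) ^ 2)
        / ((d : ℝ) ^ 2 * (p ^ 2 + (1 - p) ^ 2))) < 0) ∧
    (∀ p : ℝ, 0 < p → p ≤ 1 →
      Real.logb 2 ((((d : ℝ) - 1) * p ^ 2 + ((d : ℝ) - (d : ℝ) * p + p) ^ 2)
        / ((d : ℝ) ^ 2 * (p ^ 2 + (1 - p) ^ 2))) < 0 → p > 2 / ((d : ℝ) + 1)) := by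
  have hd2 : (2 : ℝ) ≤ (d : ℝ) := by exact_mod_cast hd
  have hd1 : (0 : ℝ) < (d : ℝ) + 1 := by linarith
  constructor
  · intro p hp1 hp2
    have hp0 : 0 < p := lt_trans (by positivity) hp1
    have hkey : 2 < ((d : ℝ) + 1) * p := by
      rwa [div_lt_iff₀ hd1, mul_comm] at hp1
    have hD : 0 < (d : ℝ) ^ 2 * (p ^ 2 + (1 - p) ^ 2) := by nlinarith
    have hN : 0 < ((d : ℝ) - 1) * p ^ 2 + ((d : ℝ) - (d : ℝ) * p + p) ^ 2 := by
      nlinarith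
    apply Real.logb_neg one_lt_two (by positivity)
    rw [div_lt_one hD]
    nlinarith [sq_nonneg (1 - p)]
  · intro p hp0 hp1 hlog
    have hdp : 0 < (d : ℝ) * p := mul_pos (by linarith) hp0
    have hD : 0 < (d : ℝ) ^ 2 * (p ^ 2 + (1 - p) ^ 2) := by
      nlinarith [sq_nonneg (1 - p), mul_pos hp0 hp0]
    have hlt1 : (((d : ℝ) - 1) * p ^ 2 + ((d : ℝ) - (d : ℝ) * p + p) ^ 2)
        / ((d : ℝ) ^ 2 * (p ^ 2 + (1 - p) ^ 2)) < 1 := by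
      by_contra h
      push_neg at h
      exact absurd (Real.logb_nonneg one_lt_two h) (not_le.mpr hlog)
    rw [div_lt_one hD] at hlt1
    rw [gt_iff_lt, div_lt_iff₀ hd1]
    nlinarith [mul_pos hdp hp0]
end
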